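/- arXiv:1302.0225 — 2 statements merged into one kernel-verified Lean document; each statement's English description precedes it below -/
import Mathlib

section
/- Let Q be a Markov operator on a countable state space, reversible with respect to a measure λ and preserving finitely supported functions. Then for every finitely supported f and every n ≥ 0: ‖Q^{2n} f‖² − ‖Q^{2n+1} f‖² ≤ (nⁿ/(n+1)ⁿ⁺¹) ‖Qⁿf‖², where ‖·‖ is the λ-weighted L² norm. -/
open scoped BigOperators

/-- The Markov operator associated to a transition kernel `q`. -/
noncomputable def Qop {S : Type*} (q : S → S → ℝ) (f : S → ℝ) : S → ℝ :=
  fun i => ∑' j, q i j * f j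

/-- The `lam`-weighted inner product on functions on `S`. -/
noncomputable def ip {S : Type*} (lam : S → ℝ) (f g : S → ℝ) : ℝ :=
  ∑' i, f i * g i * lam i

/-!
Reversibility makes `Qop q` symmetric for the `lam`-weighted inner product on finitely supported
functions, so `a k = ‖Qᵏ f‖²` satisfies `a (k + 1) = ⟪Qᵏ f, Qᵏ⁺² f⟫`, and Cauchy–Schwarz gives
`a (k + 1)² ≤ a k * a (k + 2)`. The ratios `a (k + 1) / a k` are therefore nondecreasing, and
chaining them from `n` to `2n` yields `a (2n)ⁿ⁺¹ ≤ a n * a (2n + 1)ⁿ`. The AM–GM bound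
`bⁿ (a - b) ≤ nⁿ / (n + 1)ⁿ⁺¹ * aⁿ⁺¹` then turns this into the estimate.
-/

theorem pow_mul_sub_le {a b : ℝ} (ha : 0 ≤ a) (hb : 0 ≤ b) (n : ℕ) :
    b ^ n * (a - b) ≤ (n : ℝ) ^ n / (n + 1) ^ (n + 1) * a ^ (n + 1) := by
  rcases n.eq_zero_or_pos with rfl | hn
  · simpa using hb
  rcases hb.eq_or_lt with rfl | hb
  · rw [zero_pow hn.ne', zero_mul]
    positivity
  have hn' : (0 : ℝ) < n := by exact_mod_cast hn
  -- Bernoulli's inequality at `x`, which is `1` exactly at the maximiser `b = n a / (n + 1)`.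
  set x : ℝ := n * a / ((n + 1) * b) with hx
  have bernoulli := one_add_mul_le_pow (a := x - 1) (by linarith [show 0 ≤ x by positivity]) (n + 1)
  have hbase : 1 + ((n + 1 : ℕ) : ℝ) * (x - 1) = n * (a - b) / b := by
    rw [hx]; push_cast; field_simp; ring
  rw [add_sub_cancel, hbase, hx, div_pow, le_div_iff₀ (by positivity)] at bernoulli
  rw [div_mul_eq_mul_div, le_div_iff₀ (by positivity)]
  refine le_of_mul_le_mul_left ?_ hn'
  calc (n : ℝ) * (b ^ n * (a - b) * (n + 1) ^ (n + 1))
      = n * (a - b) / b * ((n + 1) * b) ^ (n + 1) := by rw [mul_pow, pow_succ b]; field_simp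
    _ ≤ (n * a) ^ (n + 1) := bernoulli
    _ = n * (n ^ n * a ^ (n + 1)) := by ring

def LogConvexSeq (a : ℕ → ℝ) : Prop :=
  ∀ k, a (k + 1) ^ 2 ≤ a k * a (k + 2)

namespace LogConvexSeq

variable {a : ℕ → ℝ}

theorem succ_mul_le_mul_succ (ha : LogConvexSeq a) (h0 : ∀ k, 0 ≤ a k) {j k : ℕ} (hjk : j ≤ k) :
    a (j + 1) * a k ≤ a j * a (k + 1) := by
  induction k, hjk using Nat.le_induction with
  | base => rw [mul_comm]
  | succ k _ ih =>
    rcases (h0 (k + 1)).eq_or_lt with hk | hk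
    · rw [← hk, mul_zero]
      exact mul_nonneg (h0 j) (h0 _)
    refine le_of_mul_le_mul_right ?_ hk
    calc a (j + 1) * a (k + 1) * a (k + 1) = a (j + 1) * a (k + 1) ^ 2 := by ring
      _ ≤ a (j + 1) * (a k * a (k + 2)) := mul_le_mul_of_nonneg_left (ha k) (h0 _)
      _ = a (j + 1) * a k * a (k + 2) := by ring
      _ ≤ a j * a (k + 1) * a (k + 2) := mul_le_mul_of_nonneg_right ih (h0 _)
      _ = a j * a (k + 1 + 1) * a (k + 1) := by ring

theorem pow_succ_le_mul_pow (ha : LogConvexSeq a) (h0 : ∀ k, 0 ≤ a k) (m k : ℕ) :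
    a (k + m) ^ (m + 1) ≤ a k * a (k + m + 1) ^ m := by
  induction m generalizing k with
  | zero => simp
  | succ m ih =>
    have hstep := ha.succ_mul_le_mul_succ h0 (j := k) (k := k + m + 1) (by omega)
    calc a (k + (m + 1)) ^ (m + 1 + 1) = a (k + 1 + m) ^ (m + 1) * a (k + m + 1) := by
          rw [pow_succ, ← add_assoc, show k + 1 + m = k + m + 1 by omega]
      _ ≤ a (k + 1) * a (k + 1 + m + 1) ^ m * a (k + m + 1) :=
          mul_le_mul_of_nonneg_right (ih (k + 1)) (h0 _)
      _ = a (k + 1) * a (k + m + 1) * a (k + m + 2) ^ m := by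
          rw [show k + 1 + m + 1 = k + m + 2 by omega]; ring
      _ ≤ a k * a (k + m + 2) * a (k + m + 2) ^ m :=
          mul_le_mul_of_nonneg_right hstep (pow_nonneg (h0 _) _)
      _ = a k * a (k + (m + 1) + 1) ^ (m + 1) := by
          rw [show k + (m + 1) + 1 = k + m + 2 by omega]; ring

theorem sub_succ_le (ha : LogConvexSeq a) (h0 : ∀ k, 0 ≤ a k) (n : ℕ) :
    a (2 * n) - a (2 * n + 1) ≤ (n : ℝ) ^ n / (n + 1) ^ (n + 1) * a n := by
  have hc : (0 : ℝ) ≤ (n : ℝ) ^ n / (n + 1) ^ (n + 1) := by positivity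
  rcases le_or_gt (a (2 * n)) (a (2 * n + 1)) with hAB | hBA
  · linarith [mul_nonneg hc (h0 n)]
  have hA : 0 < a (2 * n) := (h0 _).trans_lt hBA
  have hpow := ha.pow_succ_le_mul_pow h0 n n
  rw [← two_mul] at hpow
  refine le_of_mul_le_mul_right ?_ (pow_pos hA (n + 1))
  calc (a (2 * n) - a (2 * n + 1)) * a (2 * n) ^ (n + 1)
      ≤ (a (2 * n) - a (2 * n + 1)) * (a n * a (2 * n + 1) ^ n) :=
        mul_le_mul_of_nonneg_left hpow (by linarith)
    _ = a n * (a (2 * n + 1) ^ n * (a (2 * n) - a (2 * n + 1))) := by ring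
    _ ≤ a n * ((n : ℝ) ^ n / (n + 1) ^ (n + 1) * a (2 * n) ^ (n + 1)) :=
        mul_le_mul_of_nonneg_left (pow_mul_sub_le hA.le (h0 _) n) (h0 n)
    _ = (n : ℝ) ^ n / (n + 1) ^ (n + 1) * a n * a (2 * n) ^ (n + 1) := by ring

end LogConvexSeq

section WeightedL2

variable {S : Type*} {lam : S → ℝ}

theorem ip_comm (f g : S → ℝ) : ip lam f g = ip lam g f := by
  simp only [ip, mul_comm (f _)]

theorem ip_eq_sum_of_support_subset {f : S → ℝ} (g : S → ℝ) {s : Finset S}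
    (hf : Function.support f ⊆ s) : ip lam f g = ∑ i ∈ s, f i * g i * lam i :=
  tsum_eq_sum' <| (Function.support_mul_subset_left _ _).trans <|
    (Function.support_mul_subset_left _ _).trans hf

theorem Qop_eq_sum_of_support_subset (q : S → S → ℝ) {f : S → ℝ} {s : Finset S}
    (hf : Function.support f ⊆ s) (i : S) : Qop q f i = ∑ j ∈ s, q i j * f j :=
  tsum_eq_sum' <| (Function.support_mul_subset_right _ _).trans hf

theorem ip_self_nonneg (hlam : ∀ i, 0 ≤ lam i) (f : S → ℝ) : 0 ≤ ip lam f f :=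
  tsum_nonneg fun i => mul_nonneg (mul_self_nonneg _) (hlam i)

theorem ip_sq_le_mul (hlam : ∀ i, 0 ≤ lam i) {f g : S → ℝ}
    (hf : (Function.support f).Finite) (hg : (Function.support g).Finite) :
    ip lam f g ^ 2 ≤ ip lam f f * ip lam g g := by
  classical
  set s := hf.toFinset ∪ hg.toFinset
  have hfs : Function.support f ⊆ s := by simp [s]
  have hgs : Function.support g ⊆ s := by simp [s]
  rw [ip_eq_sum_of_support_subset g hfs, ip_eq_sum_of_support_subset f hfs,
    ip_eq_sum_of_support_subset g hgs]
  exact Finset.sum_sq_le_sum_mul_sum_of_sq_le_mul s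
    (fun i _ => mul_nonneg (mul_self_nonneg _) (hlam i))
    (fun i _ => mul_nonneg (mul_self_nonneg _) (hlam i)) fun i _ => (by ring : _ = _).le

theorem ip_Qop_left {q : S → S → ℝ} (hrev : ∀ i j, lam i * q i j = lam j * q j i)
    {f g : S → ℝ} (hf : (Function.support f).Finite) (hg : (Function.support g).Finite) :
    ip lam (Qop q f) g = ip lam f (Qop q g) := by
  classical
  rw [ip_comm, ip_eq_sum_of_support_subset _ hg.coe_toFinset.ge,
    ip_eq_sum_of_support_subset _ hf.coe_toFinset.ge]
  simp only [Qop_eq_sum_of_support_subset q hf.coe_toFinset.ge,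
    Qop_eq_sum_of_support_subset q hg.coe_toFinset.ge, Finset.mul_sum, Finset.sum_mul]
  rw [Finset.sum_comm]
  refine Finset.sum_congr rfl fun j _ => Finset.sum_congr rfl fun i _ => ?_
  linear_combination f j * g i * hrev i j

end WeightedL2

theorem support_iterate_Qop_finite {S : Type*} {q : S → S → ℝ}
    (hQfin : ∀ f : S → ℝ, (Function.support f).Finite → (Function.support (Qop q f)).Finite)
    {f : S → ℝ} (hf : (Function.support f).Finite) (k : ℕ) :
    (Function.support ((Qop q)^[k] f)).Finite := by
  induction k with
  | zero => exact hf
  | succ k ih => exact Function.iterate_succ_apply' (Qop q) k f ▸ hQfin _ ih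

theorem logConvexSeq_ip_iterate_Qop {S : Type*} {q : S → S → ℝ} {lam : S → ℝ}
    (hlam : ∀ i, 0 ≤ lam i) (hrev : ∀ i j, lam i * q i j = lam j * q j i)
    (hQfin : ∀ f : S → ℝ, (Function.support f).Finite → (Function.support (Qop q f)).Finite)
    {f : S → ℝ} (hf : (Function.support f).Finite) :
    LogConvexSeq fun k => ip lam ((Qop q)^[k] f) ((Qop q)^[k] f) := by
  intro k
  have hfin := support_iterate_Qop_finite hQfin hf
  have hadj : ip lam ((Qop q)^[k + 1] f) ((Qop q)^[k + 1] f)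
      = ip lam ((Qop q)^[k] f) ((Qop q)^[k + 2] f) := by
    simpa only [← Function.iterate_succ_apply' (Qop q)] using
      ip_Qop_left hrev (hfin k) (hfin (k + 1))
  simp only [hadj]
  exact ip_sq_le_mul hlam (hfin k) (hfin (k + 2))

theorem energy_decay_nash_general {S : Type*}
    (q : S → S → ℝ) (lam : S → ℝ)
    (hlam : ∀ i, 0 < lam i)
    (hrev : ∀ i j, lam i * q i j = lam j * q j i)
    (hQfin : ∀ f : S → ℝ, (Function.support f).Finite →
      (Function.support (Qop q f)).Finite)
    (f : S → ℝ) (hf : (Function.support f).Finite) :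
    ∀ n : ℕ,
      ip lam ((Qop q)^[2 * n] f) ((Qop q)^[2 * n] f)
        - ip lam ((Qop q)^[2 * n + 1] f) ((Qop q)^[2 * n + 1] f)
      ≤ ((n : ℝ) ^ n / (n + 1) ^ (n + 1)) * ip lam ((Qop q)^[n] f) ((Qop q)^[n] f) :=
  have hlam' : ∀ i, 0 ≤ lam i := fun i => (hlam i).le
  (logConvexSeq_ip_iterate_Qop hlam' hrev hQfin hf).sub_succ_le fun _ => ip_self_nonneg hlam' _

theorem energy_decay_nash {S : Type*} [Countable S]
    (q : S → S → ℝ) (lam : S → ℝ)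
    (hq0 : ∀ i j, 0 ≤ q i j)
    (hq1 : ∀ i, HasSum (fun j => q i j) 1)
    (hlam : ∀ i, 0 < lam i)
    (hrev : ∀ i j, lam i * q i j = lam j * q j i)
    (hQfin : ∀ f : S → ℝ, (Function.support f).Finite →
      (Function.support (Qop q f)).Finite)
    (f : S → ℝ) (hf : (Function.support f).Finite) :
    ∀ n : ℕ,
      ip lam ((Qop q)^[2 * n] f) ((Qop q)^[2 * n] f)
        - ip lam ((Qop q)^[2 * n + 1] f) ((Qop q)^[2 * n + 1] f)
      ≤ ((n : ℝ) ^ n / (n + 1) ^ (n + 1)) * ip lam ((Qop q)^[n] f) ((Qop q)^[n] f) :=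
  energy_decay_nash_general q lam hlam hrev hQfin f hf
end

section
/- For the nearest-neighbour random walk on ℤ with conductances c(x,x+1) > 0 and transition probabilities p(x,x±1) = c(x,x±1)/c̄(x) where c̄(x) = c(x−1,x)+c(x,x+1), the Dirichlet form associated with P² and the measure (c̄(x)) satisfies, for all finitely supported f,g: E(f,g) = Σ_{x∈ℤ} (f(x−1)−f(x+1))(g(x−1)−g(x+1)) · c(x−1,x)c(x,x+1)/c̄(x). -/
/-!
Only the pairs `(x - 1, x + 1)` and `(x + 1, x - 1)` contribute to the Dirichlet form: the
two-step kernel vanishes unless `y = x` or `y = x ± 2`, and the diagonal carries the factor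
`f x - f x = 0`. Detailed balance `c̄(x) p(x, x ± 1) = c(x, x ± 1)` turns the weight of the pair
through the midpoint `x` into `c(x - 1, x) c(x, x + 1) / c̄(x)`, and the two orientations of each
pair contribute equally, which absorbs the factor `1/2`.
-/

open scoped BigOperators

/-- `cbar κ x = c(x−1,x) + c(x,x+1)`, where `κ x` denotes the conductance of
the edge `{x, x+1}` of `ℤ`. -/
noncomputable def cbar (κ : ℤ → ℝ) (x : ℤ) : ℝ := κ (x - 1) + κ x

/-- One-step transition probabilities of the nearest-neighbour conductance walk. -/
noncomputable def step (κ : ℤ → ℝ) (x y : ℤ) : ℝ :=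
  if y = x + 1 then κ x / cbar κ x
  else if y = x - 1 then κ (x - 1) / cbar κ x else 0

open Function Set

theorem tsum_eq_tsum_comp_add_tsum_comp {α β γ δ : Type*} [AddCommMonoid α] [TopologicalSpace α]
    [ContinuousAdd α] [T2Space α] {F : δ → α} {g₁ : β → δ} {g₂ : γ → δ}
    (h₁ : Injective g₁) (h₂ : Injective g₂) (hd : Disjoint (range g₁) (range g₂))
    (hF : support F ⊆ range g₁ ∪ range g₂)
    (hs₁ : Summable (F ∘ g₁)) (hs₂ : Summable (F ∘ g₂)) :
    ∑' p, F p = ∑' x, F (g₁ x) + ∑' x, F (g₂ x) := by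
  rw [← tsum_subtype_eq_of_support_subset hF, Summable.tsum_union_disjoint hd,
    tsum_range F h₁, tsum_range F h₂]
  · exact (Equiv.ofInjective g₁ h₁).summable_iff.mp hs₁
  · exact (Equiv.ofInjective g₂ h₂).summable_iff.mp hs₂

theorem summable_sub_mul_sub_mul_of_finite_support {f : ℤ → ℝ} (hf : (support f).Finite)
    (g w : ℤ → ℝ) :
    Summable fun x => (f (x - 1) - f (x + 1)) * (g (x - 1) - g (x + 1)) * w x := by
  have h₁ : HasFiniteSupport fun x => f (x - 1) :=
    HasFiniteSupport.fun_comp_of_injective sub_left_injective hf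
  have h₂ : HasFiniteSupport fun x => f (x + 1) :=
    HasFiniteSupport.fun_comp_of_injective (add_left_injective _) hf
  exact summable_of_hasFiniteSupport (((h₁.sub h₂).fun_mul_left _).fun_mul_left _)

theorem disjoint_range_sub_one_add_one :
    Disjoint (range fun x : ℤ => (x - 1, x + 1)) (range fun x : ℤ => (x + 1, x - 1)) := by
  rw [disjoint_left]
  rintro _ ⟨x, rfl⟩ ⟨y, hy⟩
  simp only [Prod.mk.injEq] at hy
  omega

section ConductanceWalk

variable {κ : ℤ → ℝ}

theorem cbar_pos (hκ : ∀ x, 0 < κ x) (x : ℤ) : 0 < cbar κ x :=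
  add_pos (hκ _) (hκ _)

theorem step_add_one (κ : ℤ → ℝ) (x : ℤ) : step κ x (x + 1) = κ x / cbar κ x := by
  simp [step]

theorem step_sub_one (κ : ℤ → ℝ) (x : ℤ) : step κ x (x - 1) = κ (x - 1) / cbar κ x := by
  simp [step, show x - 1 ≠ x + 1 by omega]

theorem step_of_ne {x y : ℤ} (h₁ : y ≠ x + 1) (h₂ : y ≠ x - 1) : step κ x y = 0 := by
  simp [step, h₁, h₂]

theorem tsum_step_mul_step (κ : ℤ → ℝ) (x y : ℤ) :
    ∑' z, step κ x z * step κ z y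
      = step κ x (x - 1) * step κ (x - 1) y + step κ x (x + 1) * step κ (x + 1) y := by
  rw [tsum_eq_sum (s := {x - 1, x + 1}), Finset.sum_pair (by omega)]
  intro z hz
  simp only [Finset.mem_insert, Finset.mem_singleton, not_or] at hz
  rw [step_of_ne hz.2 hz.1, zero_mul]

theorem tsum_step_mul_step_of_ne {x y : ℤ} (h₀ : y ≠ x) (h₂ : y ≠ x + 2) (h₃ : y ≠ x - 2) :
    ∑' z, step κ x z * step κ z y = 0 := by
  rw [tsum_step_mul_step, step_of_ne (x := x - 1) (by omega) (by omega),
    step_of_ne (x := x + 1) (by omega) (by omega), mul_zero, mul_zero, add_zero]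

theorem tsum_step_mul_step_sub_one_add_one (κ : ℤ → ℝ) (x : ℤ) :
    ∑' z, step κ (x - 1) z * step κ z (x + 1) = step κ (x - 1) x * step κ x (x + 1) := by
  rw [tsum_step_mul_step, step_of_ne (x := x - 1 - 1) (by omega) (by omega), mul_zero, zero_add,
    sub_add_cancel]

theorem tsum_step_mul_step_add_one_sub_one (κ : ℤ → ℝ) (x : ℤ) :
    ∑' z, step κ (x + 1) z * step κ z (x - 1) = step κ (x + 1) x * step κ x (x - 1) := by
  rw [tsum_step_mul_step, step_of_ne (x := x + 1 + 1) (by omega) (by omega), mul_zero, add_zero,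
    add_sub_cancel_right]

theorem cbar_mul_step_add_one {x : ℤ} (hc : cbar κ x ≠ 0) : cbar κ x * step κ x (x + 1) = κ x := by
  rw [step_add_one, mul_div_cancel₀ _ hc]

theorem cbar_mul_step_sub_one {x : ℤ} (hc : cbar κ x ≠ 0) :
    cbar κ x * step κ x (x - 1) = κ (x - 1) := by
  rw [step_sub_one, mul_div_cancel₀ _ hc]

theorem tsum_step_mul_step_sub_one_add_one_mul_cbar {x : ℤ} (hc : cbar κ (x - 1) ≠ 0) :
    (∑' z, step κ (x - 1) z * step κ z (x + 1)) * cbar κ (x - 1) = κ (x - 1) * κ x / cbar κ x := by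
  have hstep : cbar κ (x - 1) * step κ (x - 1) x = κ (x - 1) := by
    simpa using cbar_mul_step_add_one hc
  rw [tsum_step_mul_step_sub_one_add_one, mul_right_comm, mul_comm _ (cbar κ _), hstep,
    step_add_one, mul_div_assoc]

theorem tsum_step_mul_step_add_one_sub_one_mul_cbar {x : ℤ} (hc : cbar κ (x + 1) ≠ 0) :
    (∑' z, step κ (x + 1) z * step κ z (x - 1)) * cbar κ (x + 1) = κ (x - 1) * κ x / cbar κ x := by
  have hstep : cbar κ (x + 1) * step κ (x + 1) x = κ x := by
    simpa using cbar_mul_step_sub_one hc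
  rw [tsum_step_mul_step_add_one_sub_one, mul_right_comm, mul_comm _ (cbar κ _), hstep,
    step_sub_one, ← mul_div_assoc, mul_comm (κ x)]

theorem support_dirichlet_summand_subset (κ f g w : ℤ → ℝ) :
    support (fun p : ℤ × ℤ =>
        (f p.1 - f p.2) * (g p.1 - g p.2) * (∑' z, step κ p.1 z * step κ z p.2) * w p.1)
      ⊆ range (fun x : ℤ => (x - 1, x + 1)) ∪ range (fun x : ℤ => (x + 1, x - 1)) := by
  rintro ⟨x, y⟩ hp
  by_cases h₂ : y = x + 2
  · exact Or.inl ⟨x + 1, by simp only [h₂, Prod.mk.injEq]; omega⟩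
  by_cases h₃ : y = x - 2
  · exact Or.inr ⟨x - 1, by simp only [h₃, Prod.mk.injEq]; omega⟩
  refine absurd ?_ hp
  by_cases h₀ : y = x
  · simp [h₀]
  · simp [tsum_step_mul_step_of_ne h₀ h₂ h₃]

end ConductanceWalk

theorem dirichlet_form_conductance_walk_general (κ : ℤ → ℝ) (hκ : ∀ x, 0 < κ x)
    (f g : ℤ → ℝ)
    (hf : (Function.support f).Finite) :
    ((1 : ℝ)/2) * ∑' p : ℤ × ℤ,
        (f p.1 - f p.2) * (g p.1 - g p.2) * (∑' z, step κ p.1 z * step κ z p.2)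
          * cbar κ p.1
      = ∑' x : ℤ,
          (f (x - 1) - f (x + 1)) * (g (x - 1) - g (x + 1))
            * (κ (x - 1) * κ x / cbar κ x) := by
  have hc : ∀ x, cbar κ x ≠ 0 := fun x => (cbar_pos hκ x).ne'
  set T : ℤ → ℝ := fun x =>
    (f (x - 1) - f (x + 1)) * (g (x - 1) - g (x + 1)) * (κ (x - 1) * κ x / cbar κ x)
  have hT : Summable T := summable_sub_mul_sub_mul_of_finite_support hf g _
  have hup : ∀ x, (f (x - 1) - f (x + 1)) * (g (x - 1) - g (x + 1))
      * (∑' z, step κ (x - 1) z * step κ z (x + 1)) * cbar κ (x - 1) = T x := fun x => by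
    rw [mul_assoc, tsum_step_mul_step_sub_one_add_one_mul_cbar (hc _)]
  have hdown : ∀ x, (f (x + 1) - f (x - 1)) * (g (x + 1) - g (x - 1))
      * (∑' z, step κ (x + 1) z * step κ z (x - 1)) * cbar κ (x + 1) = T x := fun x => by
    rw [mul_assoc, tsum_step_mul_step_add_one_sub_one_mul_cbar (hc _)]
    ring
  rw [tsum_eq_tsum_comp_add_tsum_comp (fun x y h => sub_left_injective (congrArg Prod.fst h))
    (fun x y h => add_left_injective _ (congrArg Prod.fst h)) disjoint_range_sub_one_add_one
    (support_dirichlet_summand_subset κ f g (cbar κ))]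
  · simp only [hup, hdown]
    ring
  · simpa only [comp_def, hup] using hT
  · simpa only [comp_def, hdown] using hT

theorem dirichlet_form_conductance_walk (κ : ℤ → ℝ) (hκ : ∀ x, 0 < κ x)
    (f g : ℤ → ℝ)
    (hf : (Function.support f).Finite) (hg : (Function.support g).Finite) :
    ((1 : ℝ)/2) * ∑' p : ℤ × ℤ,
        (f p.1 - f p.2) * (g p.1 - g p.2) * (∑' z, step κ p.1 z * step κ z p.2)
          * cbar κ p.1
      = ∑' x : ℤ,
          (f (x - 1) - f (x + 1)) * (g (x - 1) - g (x + 1))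
            * (κ (x - 1) * κ x / cbar κ x) :=
  dirichlet_form_conductance_walk_general κ hκ f g hf
end
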